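/- Let X be a compact metric space and n ≥ 0, R > 0. Then width_n(X) < R if and only if there exists a finite simplicial complex N of dimension at most n and a continuous map ψ : X → N such that every fiber ψ⁻¹(s), s ∈ N, has radius less than R in X. -/

import Mathlib

open Metric ENNReal Geometry

/-- The radius of a subset `A` of a metric space `X`: the infimum of `R` such that `A` is
contained in a ball `B(x, R)` for some `x ∈ X`. -/
noncomputable def setRadius {X : Type*} [MetricSpace X] (A : Set X) : ℝ≥0∞ :=
  ⨅ (x : X) (R : ℝ≥0∞) (_ : A ⊆ EMetric.ball x R), R

/-- The `m`-th width of a metric space `X`: the infimum, over finite open covers of `X` of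
multiplicity at most `m + 1`, of the largest radius of a member of the cover. -/
noncomputable def width (X : Type*) [MetricSpace X] (m : ℕ) : ℝ≥0∞ :=
  ⨅ (k : ℕ) (V : Fin k → Set X)
    (_ : ∀ i, IsOpen (V i)) (_ : ⋃ i, V i = Set.univ)
    (_ : ∀ x : X, Nat.card {i : Fin k // x ∈ V i} ≤ m + 1),
    ⨆ i, setRadius (V i)

/-!
If `width_n X < R`, a partition of unity subordinate to a witnessing cover maps `X` into the
nerve of the cover, which is `n`-dimensional by the multiplicity bound; a fibre lies in every
member of the cover whose bump function is positive at one of its points.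

Conversely, compactness gives `δ > 0` such that preimages of `δ`-balls of `N` have radius `< R`.
Barycentric coordinates identify `N` with a compact set of weight vectors, and the open stars of
the vertices of an iterated barycentric subdivision of `N`, whose mesh shrinks by the factor
`n / (n + 1)` at each step, eventually form a cover of multiplicity `≤ n + 1` by sets of
diameter `< δ`. The coordinates of a subdivision are explicit: at the point with coordinates `T`,
the barycentre of the face `w` has weight `#w` times the length of
`{θ ≥ 0 | {j | θ < T j} = w}`; these level sets partition `[0, T i)` as `w` ranges over the
faces containing `i`.
-/

open Finset MeasureTheory

universe u

section Convexity

variable {ι E : Type*}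

lemma Finset.centroid_eq_inv_card_smul_sum [AddCommGroup E] [Module ℝ E] {s : Finset ι}
    (hs : s.Nonempty) (p : ι → E) : s.centroid ℝ p = (#s : ℝ)⁻¹ • ∑ i ∈ s, p i := by
  rw [centroid_eq_centerMass s hs,
    centerMass_eq_of_sum_1 _ _ (sum_centroidWeights_eq_one_of_nonempty ℝ s hs), smul_sum]
  simp [centroidWeights_apply]

variable [NormedAddCommGroup E] [NormedSpace ℝ E]

lemma Finset.centroid_mem_convexHull_image {s : Finset ι} (hs : s.Nonempty) (p : ι → E) :
    s.centroid ℝ p ∈ convexHull ℝ (p '' s) := by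
  rw [centroid_eq_centerMass s hs]
  exact centerMass_mem_convexHull _ (fun _ _ => by simp [centroidWeights_apply])
    (by rw [sum_centroidWeights_eq_one_of_nonempty ℝ s hs]; exact one_pos)
    fun i hi => Set.mem_image_of_mem p hi

lemma sum_smul_mem_convexHull_image_support [Fintype ι] {c : ι → ℝ} (hc : c ∈ stdSimplex ℝ ι)
    (v : ι → E) : ∑ j, c j • v j ∈ convexHull ℝ (v '' {j | c j ≠ 0}) := by
  rw [← sum_filter_of_ne (p := fun j => c j ≠ 0) fun j _ h => left_ne_zero_of_smul h]
  refine (convex_convexHull ℝ _).sum_mem (fun j _ => hc.1 j) ?_ fun j hj =>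
    subset_convexHull ℝ _ ⟨j, (mem_filter.1 hj).2, rfl⟩
  rw [sum_filter_ne_zero, hc.2]

lemma norm_centroid_sub_centroid_le {p : ι → E} {A B : Finset ι} (hA : A.Nonempty) (hAB : A ⊆ B)
    {n : ℕ} (hB : #B ≤ n + 1) {C : ℝ} (hC : ∀ u ∈ B, ∀ v ∈ B, ‖p u - p v‖ ≤ C) :
    ‖A.centroid ℝ p - B.centroid ℝ p‖ ≤ n / (n + 1) * C := by
  classical
  have hC0 : 0 ≤ C := by
    obtain ⟨a, ha⟩ := hA
    simpa using hC a (hAB ha) a (hAB ha)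
  obtain rfl | hne := eq_or_ne A B
  · rw [sub_self, norm_zero]; positivity
  have hD : (B \ A).Nonempty := sdiff_nonempty.2 fun h => hne (hAB.antisymm h)
  have hcard : (#A : ℝ) + #(B \ A) = #B := by
    rw [add_comm, ← Nat.cast_add, card_sdiff_add_card_eq_card hAB]
  have hA0 : (#A : ℝ) ≠ 0 := by simp [hA.ne_empty]
  have hD0 : (#(B \ A) : ℝ) ≠ 0 := by simp [hD.ne_empty]
  have hB0 : (#B : ℝ) ≠ 0 := by simp [(hA.mono hAB).ne_empty]
  have hsplit : A.centroid ℝ p - B.centroid ℝ p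
      = (#(B \ A) / #B : ℝ) • (A.centroid ℝ p - (B \ A).centroid ℝ p) := by
    rw [centroid_eq_inv_card_smul_sum hA, centroid_eq_inv_card_smul_sum hD,
      centroid_eq_inv_card_smul_sum (hA.mono hAB), ← sum_sdiff hAB, ← hcard]
    match_scalars <;> field_simp
    ring
  have hfar : ‖A.centroid ℝ p - (B \ A).centroid ℝ p‖ ≤ C := by
    obtain ⟨_, ⟨u, hu, rfl⟩, _, ⟨v, hv, rfl⟩, hle⟩ := convexHull_exists_dist_ge2
      (centroid_mem_convexHull_image hA p) (centroid_mem_convexHull_image hD p)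
    rw [← dist_eq_norm]
    exact hle.trans ((dist_eq_norm _ _).trans_le (hC u (hAB hu) v (sdiff_subset hv)))
  have hfrac : (#(B \ A) / #B : ℝ) ≤ n / (n + 1) := by
    have h1 : (1 : ℝ) ≤ #A := by exact_mod_cast hA.card_pos
    have h2 : (#B : ℝ) ≤ n + 1 := by exact_mod_cast hB
    rw [div_le_div_iff₀ (by positivity) (by positivity)]
    nlinarith
  rw [hsplit, norm_smul, Real.norm_of_nonneg (by positivity)]
  exact mul_le_mul hfrac hfar (norm_nonneg _) (by positivity)

end Convexity

def stdSimplexSkeleton (ι : Type*) [Fintype ι] (n : ℕ) : Set (ι → ℝ) :=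
  {t | t ∈ stdSimplex ℝ ι ∧ #{i | t i ≠ 0} ≤ n + 1}

noncomputable section BarycentricSubdivision

variable {κ : Type*}

abbrev NonemptyFinset (κ : Type*) := {s : Finset κ // s.Nonempty}

lemma continuous_finset_fold_max (s : Finset κ) (b : ℝ) :
    Continuous fun T : κ → ℝ => s.fold max b T := by
  induction s using Finset.cons_induction with
  | empty => exact continuous_const
  | cons a s ha ih => simpa only [fold_cons] using (continuous_apply a).max ih

variable [Fintype κ]

def superlevel (T : κ → ℝ) (θ : ℝ) : Finset κ := {j | θ < T j}

lemma superlevel_antitone (T : κ → ℝ) : Antitone (superlevel T) := fun _ _ h _ hj => by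
  simp only [superlevel, mem_filter, mem_univ, true_and] at hj ⊢
  exact h.trans_lt hj

variable [DecidableEq κ]

def levelInterval (T : κ → ℝ) (w : NonemptyFinset κ) : Set ℝ :=
  Set.Ico (w.1ᶜ.fold max 0 T) (w.1.inf' w.2 T)

lemma mem_levelInterval_iff {T : κ → ℝ} {w : NonemptyFinset κ} {θ : ℝ} :
    θ ∈ levelInterval T w ↔ 0 ≤ θ ∧ superlevel T θ = w.1 := by
  simp only [levelInterval, Set.mem_Ico, fold_max_le, lt_inf'_iff, Finset.ext_iff, superlevel,
    mem_filter, mem_univ, true_and, mem_compl, and_assoc]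
  refine and_congr_right fun _ => ⟨fun ⟨h₁, h₂⟩ j => ⟨fun h => ?_, h₂ j⟩, fun h => ⟨?_, ?_⟩⟩
  · exact by_contra fun hj => (h₁ j hj).not_gt h
  · exact fun j hj => not_lt.1 fun h' => hj ((h j).1 h')
  · exact fun j hj => (h j).2 hj

/-- The barycentric coordinate, with respect to the barycentric subdivision, of the barycentre
of the face `w` at the point with barycentric coordinates `T`. -/
def sdCoord (T : κ → ℝ) (w : NonemptyFinset κ) : ℝ :=
  #w.1 * volume.real (levelInterval T w)

lemma sdCoord_nonneg (T : κ → ℝ) (w : NonemptyFinset κ) : 0 ≤ sdCoord T w := by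
  unfold sdCoord
  positivity

lemma continuous_sdCoord (w : NonemptyFinset κ) : Continuous fun T : κ → ℝ => sdCoord T w := by
  simp_rw [sdCoord, levelInterval, Real.volume_real_Ico]
  exact continuous_const.mul (((Continuous.finset_inf'_apply w.2 fun j _ => continuous_apply j).sub
    (continuous_finset_fold_max _ _)).max continuous_const)

lemma exists_superlevel_eq_of_sdCoord_ne_zero {T : κ → ℝ} {w : NonemptyFinset κ}
    (h : sdCoord T w ≠ 0) : ∃ θ, 0 ≤ θ ∧ superlevel T θ = w.1 := by
  obtain ⟨θ, hθ⟩ := nonempty_of_measureReal_ne_zero (right_ne_zero_of_mul h)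
  exact ⟨θ, mem_levelInterval_iff.1 hθ⟩

lemma pos_of_sdCoord_ne_zero {T : κ → ℝ} {w : NonemptyFinset κ} (h : sdCoord T w ≠ 0) {j : κ}
    (hj : j ∈ w.1) : 0 < T j := by
  obtain ⟨θ, hθ, hw⟩ := exists_superlevel_eq_of_sdCoord_ne_zero h
  rw [← hw, superlevel, mem_filter] at hj
  exact hθ.trans_lt hj.2

lemma sdCoord_chain {T : κ → ℝ} {w w' : NonemptyFinset κ} (h : sdCoord T w ≠ 0)
    (h' : sdCoord T w' ≠ 0) : w.1 ⊆ w'.1 ∨ w'.1 ⊆ w.1 := by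
  obtain ⟨θ, -, hθ⟩ := exists_superlevel_eq_of_sdCoord_ne_zero h
  obtain ⟨θ', -, hθ'⟩ := exists_superlevel_eq_of_sdCoord_ne_zero h'
  rw [← hθ, ← hθ']
  exact (le_total θ' θ).imp (fun h => superlevel_antitone T h) fun h => superlevel_antitone T h

lemma sum_volume_levelInterval {T : κ → ℝ} {i : κ} (hT : 0 ≤ T i) :
    ∑ w : NonemptyFinset κ with i ∈ w.1, volume.real (levelInterval T w) = T i := by
  have hunion : ⋃ w ∈ ({w | i ∈ w.1} : Finset (NonemptyFinset κ)), levelInterval T w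
      = Set.Ico 0 (T i) := by
    ext θ
    simp only [Set.mem_iUnion, mem_levelInterval_iff, mem_filter, mem_univ, true_and, exists_prop]
    constructor
    · rintro ⟨w, hi, hθ, hw⟩
      rw [← hw] at hi
      exact ⟨hθ, by simpa [superlevel] using hi⟩
    · rintro ⟨hθ, hi⟩
      have hi' : i ∈ superlevel T θ := by simpa [superlevel] using hi
      exact ⟨⟨superlevel T θ, i, hi'⟩, hi', hθ, rfl⟩
  rw [← measureReal_biUnion_finset (f := levelInterval T) ?_ (fun _ _ => measurableSet_Ico)
    (fun _ _ => measure_Ico_lt_top.ne), hunion, Real.volume_real_Ico_of_le hT, sub_zero]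
  intro w _ w' _ hne
  refine Set.disjoint_left.2 fun θ hθ hθ' => hne (Subtype.ext ?_)
  rw [← (mem_levelInterval_iff.1 hθ).2, (mem_levelInterval_iff.1 hθ').2]

lemma sum_sdCoord_smul_centroid {E : Type*} [AddCommGroup E] [Module ℝ E] {T : κ → ℝ}
    (hT : ∀ i, 0 ≤ T i) (q : κ → E) :
    ∑ w : NonemptyFinset κ, sdCoord T w • w.1.centroid ℝ q = ∑ i, T i • q i := by
  have hcard (w : NonemptyFinset κ) : (#w.1 : ℝ) ≠ 0 := by simp [w.2.ne_empty]
  calc ∑ w : NonemptyFinset κ, sdCoord T w • w.1.centroid ℝ q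
      = ∑ w : NonemptyFinset κ, ∑ i ∈ w.1, volume.real (levelInterval T w) • q i := by
        refine sum_congr rfl fun w _ => ?_
        rw [centroid_eq_inv_card_smul_sum w.2, sdCoord, smul_smul, mul_right_comm,
          mul_inv_cancel₀ (hcard w), one_mul, smul_sum]
    _ = ∑ i, ∑ w : NonemptyFinset κ with i ∈ w.1, volume.real (levelInterval T w) • q i :=
        sum_comm' fun w i => by simp
    _ = ∑ i, T i • q i := by
        simp_rw [← sum_smul, sum_volume_levelInterval (hT _)]

lemma sum_sdCoord {T : κ → ℝ} (hT : ∀ i, 0 ≤ T i) :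
    ∑ w : NonemptyFinset κ, sdCoord T w = ∑ i, T i := by
  have h := sum_sdCoord_smul_centroid hT (fun _ => (1 : ℝ))
  simp only [smul_eq_mul, mul_one] at h
  rw [← h]
  refine sum_congr rfl fun w _ => ?_
  rw [centroid_eq_inv_card_smul_sum w.2]
  simp [w.2.ne_empty]

/-- The faces with nonzero coordinate form a chain of subsets of the support of `T`. -/
lemma card_support_sdCoord_le (T : κ → ℝ) :
    #{w : NonemptyFinset κ | sdCoord T w ≠ 0} ≤ #{i | T i ≠ 0} := by
  have hsub {w : NonemptyFinset κ} (hw : sdCoord T w ≠ 0) :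
      w.1 ⊆ ({i | T i ≠ 0} : Finset κ) := fun j hj => by
    simpa using (pos_of_sdCoord_ne_zero hw hj).ne'
  calc #{w : NonemptyFinset κ | sdCoord T w ≠ 0}
      ≤ #(Icc 1 #{i | T i ≠ 0}) := by
        refine card_le_card_of_injOn (fun w => #w.1) (fun w hw => ?_)
          fun w hw w' hw' hcard => ?_
        · simp only [coe_filter, mem_univ, true_and, Set.mem_ofPred_eq] at hw
          exact mem_Icc.2 ⟨w.2.card_pos, card_le_card (hsub hw)⟩
        · simp only [coe_filter, mem_univ, true_and, Set.mem_ofPred_eq] at hw hw'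
          refine Subtype.ext ((sdCoord_chain hw hw').elim (fun h => ?_) fun h => ?_)
          · exact eq_of_subset_of_card_le h hcard.ge
          · exact (eq_of_subset_of_card_le h hcard.le).symm
    _ = #{i | T i ≠ 0} := by simp

lemma sdCoord_mem_stdSimplexSkeleton {n : ℕ} {T : κ → ℝ} (hT : T ∈ stdSimplexSkeleton κ n) :
    sdCoord T ∈ stdSimplexSkeleton (NonemptyFinset κ) n :=
  ⟨⟨sdCoord_nonneg T, (sum_sdCoord hT.1.1).trans hT.1.2⟩,
    (card_support_sdCoord_le T).trans hT.2⟩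

end BarycentricSubdivision

noncomputable section IteratedSubdivision

/-- Vertices of the `r`-th barycentric subdivision of the simplex spanned by `ι`: a vertex at
level `r + 1` is the barycentre of a face at level `r`. -/
def SdIndex (ι : Type u) : ℕ → Type u
  | 0 => ι
  | r + 1 => NonemptyFinset (SdIndex ι r)

instance (ι : Type u) (r : ℕ) : DecidableEq (SdIndex ι r) := Classical.decEq _

instance SdIndex.instFintype (ι : Type u) [Fintype ι] : ∀ r, Fintype (SdIndex ι r)
  | 0 => ‹Fintype ι›
  | r + 1 =>
    have := SdIndex.instFintype ι r
    inferInstanceAs (Fintype (NonemptyFinset (SdIndex ι r)))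

variable {ι : Type u}

def sdVertex {E : Type*} [AddCommGroup E] [Module ℝ E] (q : ι → E) : ∀ r, SdIndex ι r → E
  | 0 => q
  | r + 1 => fun w => w.1.centroid ℝ (sdVertex q r)

variable [Fintype ι]

def sdCoords (t : ι → ℝ) : ∀ r, SdIndex ι r → ℝ
  | 0 => t
  | r + 1 => sdCoord (sdCoords t r)

lemma sdCoords_mem_stdSimplexSkeleton {n : ℕ} {t : ι → ℝ} (ht : t ∈ stdSimplexSkeleton ι n) :
    ∀ r, sdCoords t r ∈ stdSimplexSkeleton (SdIndex ι r) n
  | 0 => ht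
  | r + 1 => sdCoord_mem_stdSimplexSkeleton (sdCoords_mem_stdSimplexSkeleton ht r)

lemma sdCoords_nonneg {t : ι → ℝ} (ht : ∀ i, 0 ≤ t i) : ∀ r w, 0 ≤ sdCoords t r w
  | 0 => ht
  | _ + 1 => sdCoord_nonneg _

lemma continuous_sdCoords : ∀ r, Continuous fun t : ι → ℝ => sdCoords t r
  | 0 => continuous_id
  | r + 1 => continuous_pi fun w => (continuous_sdCoord w).comp (continuous_sdCoords r)

lemma sum_sdCoords_smul_sdVertex {E : Type*} [AddCommGroup E] [Module ℝ E] {t : ι → ℝ}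
    (ht : ∀ i, 0 ≤ t i) (q : ι → E) :
    ∀ r, ∑ w, sdCoords t r w • sdVertex q r w = ∑ i, t i • q i
  | 0 => rfl
  | r + 1 => (sum_sdCoord_smul_centroid (sdCoords_nonneg ht r) (sdVertex q r)).trans
      (sum_sdCoords_smul_sdVertex ht q r)

variable {E : Type*} [NormedAddCommGroup E] [NormedSpace ℝ E] {n : ℕ} {q : ι → E} {D : ℝ}
  {t : ι → ℝ}

lemma norm_sdVertex_sub_le (hq : ∀ i j, ‖q i - q j‖ ≤ D) (ht : t ∈ stdSimplexSkeleton ι n) :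
    ∀ r w w', sdCoords t r w ≠ 0 → sdCoords t r w' ≠ 0 →
      ‖sdVertex q r w - sdVertex q r w'‖ ≤ (n / (n + 1)) ^ r * D
  | 0, w, w', _, _ => by simpa [sdVertex] using hq w w'
  | r + 1, w, w', hw, hw' => by
    wlog hsub : w.1 ⊆ w'.1 generalizing w w'
    · rw [norm_sub_rev]
      exact this w' w hw' hw ((sdCoord_chain hw hw').resolve_left hsub)
    have hsupp : ∀ u ∈ w'.1, sdCoords t r u ≠ 0 := fun u hu =>
      (pos_of_sdCoord_ne_zero hw' hu).ne'
    have hcard : #w'.1 ≤ n + 1 :=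
      (card_le_card fun u hu => by simpa using hsupp u hu).trans
        (sdCoords_mem_stdSimplexSkeleton ht r).2
    calc ‖sdVertex q (r + 1) w - sdVertex q (r + 1) w'‖
        ≤ n / (n + 1) * ((n / (n + 1)) ^ r * D) :=
          norm_centroid_sub_centroid_le w.2 hsub hcard fun u hu v hv =>
            norm_sdVertex_sub_le hq ht r u v (hsupp u hu) (hsupp v hv)
      _ = (n / (n + 1)) ^ (r + 1) * D := by ring

lemma dist_sum_smul_sdVertex_le (hq : ∀ i j, ‖q i - q j‖ ≤ D)
    (ht : t ∈ stdSimplexSkeleton ι n) (r : ℕ) {w : SdIndex ι r} (hw : sdCoords t r w ≠ 0) :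
    dist (∑ i, t i • q i) (sdVertex q r w) ≤ (n / (n + 1)) ^ r * D := by
  rw [← sum_sdCoords_smul_sdVertex ht.1.1 q r]
  obtain ⟨_, ⟨w', hw', rfl⟩, hle⟩ := convexHull_exists_dist_ge
    (sum_smul_mem_convexHull_image_support (sdCoords_mem_stdSimplexSkeleton ht r).1
      (sdVertex q r)) (sdVertex q r w)
  exact hle.trans ((dist_eq_norm _ _).trans_le (norm_sdVertex_sub_le hq ht r w' w hw' hw))

theorem exists_fine_subdivision (q : ι → E) (n : ℕ) {δ : ℝ} (hδ : 0 < δ) :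
    ∃ (κ : Type u) (_ : Fintype κ) (T : (ι → ℝ) → κ → ℝ), Continuous T ∧
      Set.MapsTo T (stdSimplexSkeleton ι n) (stdSimplexSkeleton κ n) ∧
      ∀ t ∈ stdSimplexSkeleton ι n, ∀ t' ∈ stdSimplexSkeleton ι n, ∀ w,
        T t w ≠ 0 → T t' w ≠ 0 → dist (∑ i, t i • q i) (∑ i, t' i • q i) < δ := by
  set D := diam (Set.range q)
  have hq (i j : ι) : ‖q i - q j‖ ≤ D := by
    rw [← dist_eq_norm]
    exact dist_le_diam_of_mem (Set.finite_range q).isBounded ⟨i, rfl⟩ ⟨j, rfl⟩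
  have hmesh : Filter.Tendsto (fun r => 2 * ((n / (n + 1) : ℝ) ^ r * D)) Filter.atTop
      (nhds 0) := by
    simpa using ((tendsto_pow_atTop_nhds_zero_of_lt_one (by positivity)
      ((div_lt_one (by positivity)).2 (lt_add_one (n : ℝ)))).mul_const D).const_mul 2
  obtain ⟨r, hr⟩ := (hmesh.eventually (gt_mem_nhds hδ)).exists
  refine ⟨SdIndex ι r, inferInstance, fun t => sdCoords t r, continuous_sdCoords r,
    fun t ht => sdCoords_mem_stdSimplexSkeleton ht r, fun t ht t' ht' w hw hw' => ?_⟩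
  calc dist (∑ i, t i • q i) (∑ i, t' i • q i)
      ≤ dist (∑ i, t i • q i) (sdVertex q r w) + dist (∑ i, t' i • q i) (sdVertex q r w) :=
        dist_triangle_right _ _ _
    _ ≤ (n / (n + 1)) ^ r * D + (n / (n + 1)) ^ r * D :=
        add_le_add (dist_sum_smul_sdVertex_le hq ht r hw) (dist_sum_smul_sdVertex_le hq ht' r hw')
    _ < δ := by linarith

end IteratedSubdivision

section BarycentricCoordinates

variable {E : Type*} {s s' : Finset E} {t t' : E → ℝ}

/-- Barycentric weights on the vertices of `s`, extended by zero to all of `E`. -/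
def faceWeights (s : Finset E) : Set (E → ℝ) :=
  {t | (∀ v, 0 ≤ t v) ∧ (∀ v ∉ s, t v = 0) ∧ ∑ v ∈ s, t v = 1}

lemma isCompact_faceWeights (s : Finset E) : IsCompact (faceWeights s) := by
  refine (isCompact_univ_pi fun _ => isCompact_Icc (a := (0 : ℝ)) (b := 1)).of_isClosed_subset
    ?_ fun t ht v _ => ⟨ht.1 v, ?_⟩
  · refine IsClosed.inter ?_ (IsClosed.inter ?_ ?_)
    · show IsClosed {t : E → ℝ | ∀ v, 0 ≤ t v}
      rw [Set.ofPred_forall]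
      exact isClosed_iInter fun v => isClosed_le continuous_const (continuous_apply v)
    · show IsClosed {t : E → ℝ | ∀ v ∉ s, t v = 0}
      simp only [Set.ofPred_forall]
      exact isClosed_iInter fun v => isClosed_iInter fun _ =>
        isClosed_eq (continuous_apply v) continuous_const
    · exact isClosed_eq (continuous_finsetSum s fun v _ => continuous_apply v) continuous_const
  · by_cases hv : v ∈ s
    · exact ht.2.2 ▸ single_le_sum (fun v _ => ht.1 v) hv
    · exact (ht.2.1 v hv).trans_le zero_le_one

lemma faceWeights_mono (ht : t ∈ faceWeights s) (hss : s ⊆ s') : t ∈ faceWeights s' :=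
  ⟨ht.1, fun v hv => ht.2.1 v fun h => hv (hss h),
    (sum_subset hss fun v _ hv => ht.2.1 v hv).symm.trans ht.2.2⟩

variable [AddCommGroup E] [Module ℝ E]

lemma sum_smul_eq_of_mem_faceWeights (ht : t ∈ faceWeights s) (hss : s ⊆ s') :
    ∑ v ∈ s', t v • v = ∑ v ∈ s, t v • v :=
  (sum_subset hss fun v _ hv => by rw [ht.2.1 v hv, zero_smul]).symm

lemma sum_smul_mem_convexHull_of_mem_faceWeights (ht : t ∈ faceWeights s) :
    ∑ v ∈ s, t v • v ∈ convexHull ℝ (s : Set E) :=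
  (convex_convexHull ℝ _).sum_mem (fun v _ => ht.1 v) ht.2.2 fun _ hv => subset_convexHull ℝ _ hv

lemma exists_mem_faceWeights_of_mem_convexHull {y : E} (hy : y ∈ convexHull ℝ (s : Set E)) :
    ∃ t ∈ faceWeights s, ∑ v ∈ s, t v • v = y := by
  classical
  obtain ⟨w, hw₀, hw₁, hwy⟩ := Finset.mem_convexHull'.1 hy
  refine ⟨fun v => if v ∈ s then w v else 0, ⟨fun v => ?_, fun v hv => if_neg hv, ?_⟩, ?_⟩
  · by_cases hv : v ∈ s <;> simp [hv, hw₀]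
  · rwa [sum_ite_mem, inter_self]
  · simp_rw [ite_smul, zero_smul]
    rwa [sum_ite_mem, inter_self]

lemma eq_of_mem_faceWeights (hs : AffineIndependent ℝ ((↑) : s → E)) (ht : t ∈ faceWeights s)
    (ht' : t' ∈ faceWeights s) (h : ∑ v ∈ s, t v • v = ∑ v ∈ s, t' v • v) : t = t' := by
  funext v
  by_cases hv : v ∈ s
  · exact hs.eq_of_sum_eq_sum_subtype (ht.2.2.trans ht'.2.2.symm) h v hv
  · rw [ht.2.1 v hv, ht'.2.1 v hv]

namespace Geometry.SimplicialComplex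

/-- The point lies in the hull of the common face `s ∩ s'`, and on a single face the weights
are unique by affine independence. -/
lemma eq_of_mem_faceWeights_of_sum_smul_eq {K : SimplicialComplex ℝ E} (hs : s ∈ K.faces)
    (hs' : s' ∈ K.faces) (ht : t ∈ faceWeights s) (ht' : t' ∈ faceWeights s')
    (h : ∑ v ∈ s, t v • v = ∑ v ∈ s', t' v • v) : t = t' := by
  classical
  have hy : ∑ v ∈ s, t v • v ∈ convexHull ℝ ↑(s ∩ s') := by
    rw [coe_inter]
    exact K.inter_subset_convexHull hs hs' ⟨sum_smul_mem_convexHull_of_mem_faceWeights ht,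
      h ▸ sum_smul_mem_convexHull_of_mem_faceWeights ht'⟩
  obtain ⟨u, hu, hu_sum⟩ := exists_mem_faceWeights_of_mem_convexHull hy
  have eq_u {σ : Finset E} (hσ : σ ∈ K.faces) (hsub : s ∩ s' ⊆ σ) {τ : E → ℝ}
      (hτ : τ ∈ faceWeights σ) (hτ_sum : ∑ v ∈ σ, τ v • v = ∑ v ∈ s, t v • v) : τ = u :=
    eq_of_mem_faceWeights (K.indep hσ) hτ (faceWeights_mono hu hsub)
      (by rw [hτ_sum, sum_smul_eq_of_mem_faceWeights hu hsub, hu_sum])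
  exact (eq_u hs inter_subset_left ht rfl).trans (eq_u hs' inter_subset_right ht' h.symm).symm

lemma exists_finset_forall_subset_of_faces_finite {K : SimplicialComplex ℝ E}
    (hfin : K.faces.Finite) : ∃ P : Finset E, ∀ s ∈ K.faces, s ⊆ P := by
  classical
  exact ⟨hfin.toFinset.sup id, fun s hs => le_sup (f := id) (hfin.mem_toFinset.2 hs)⟩

theorem exists_continuous_faceWeights [TopologicalSpace E] [T2Space E] [ContinuousAdd E]
    [ContinuousSMul ℝ E] (K : SimplicialComplex ℝ E) (hfin : K.faces.Finite) :
    ∃ c : K.space → E → ℝ, Continuous c ∧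
      ∀ y, ∃ s ∈ K.faces, c y ∈ faceWeights s ∧ ∑ v ∈ s, c y v • v = y := by
  obtain ⟨P, hP⟩ := exists_finset_forall_subset_of_faces_finite hfin
  set M := ⋃ s ∈ K.faces, faceWeights s
  have hM {t : E → ℝ} (ht : t ∈ M) : ∃ s ∈ K.faces, t ∈ faceWeights s ∧
      ∑ v ∈ P, t v • v = ∑ v ∈ s, t v • v := by
    obtain ⟨s, hs, hts⟩ := Set.mem_iUnion₂.1 ht
    exact ⟨s, hs, hts, sum_smul_eq_of_mem_faceWeights hts (hP s hs)⟩
  let f : M → K.space := fun t => ⟨∑ v ∈ P, t.1 v • v, by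
    obtain ⟨s, hs, hts, hsum⟩ := hM t.2
    exact hsum ▸ K.convexHull_subset_space hs (sum_smul_mem_convexHull_of_mem_faceWeights hts)⟩
  have hf : Function.Bijective f := by
    refine ⟨fun t t' htt' => Subtype.ext ?_, fun y => ?_⟩
    · obtain ⟨s, hs, hts, hsum⟩ := hM t.2
      obtain ⟨s', hs', hts', hsum'⟩ := hM t'.2
      exact eq_of_mem_faceWeights_of_sum_smul_eq hs hs' hts hts'
        (hsum.symm.trans ((congrArg Subtype.val htt').trans hsum'))
    · obtain ⟨s, hs, hy⟩ := mem_space_iff.1 y.2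
      obtain ⟨t, hts, hty⟩ := exists_mem_faceWeights_of_mem_convexHull hy
      exact ⟨⟨t, Set.mem_iUnion₂.2 ⟨s, hs, hts⟩⟩,
        Subtype.ext ((sum_smul_eq_of_mem_faceWeights hts (hP s hs)).trans hty)⟩
  have hcont : Continuous f := (continuous_finsetSum P fun v _ =>
    ((continuous_apply v).comp continuous_subtype_val).smul continuous_const).subtype_mk _
  have : CompactSpace M := isCompact_iff_compactSpace.1
    (hfin.isCompact_biUnion fun s _ => isCompact_faceWeights s)
  let e := hcont.homeoOfEquivCompactToT2 (f := Equiv.ofBijective f hf)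
  refine ⟨fun y => (e.symm y).1, continuous_subtype_val.comp e.symm.continuous, fun y => ?_⟩
  obtain ⟨s, hs, hts, hsum⟩ := hM (e.symm y).2
  exact ⟨s, hs, hts, hsum.symm.trans (congrArg Subtype.val (e.apply_symm_apply y))⟩

end Geometry.SimplicialComplex

end BarycentricCoordinates

namespace Geometry.SimplicialComplex

variable {E : Type u} [NormedAddCommGroup E] [NormedSpace ℝ E] (K : SimplicialComplex ℝ E)

theorem exists_continuous_stdSimplexSkeleton_coords (hfin : K.faces.Finite) {n : ℕ}
    (hdim : ∀ s ∈ K.faces, #s ≤ n + 1) :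
    ∃ (ι : Type u) (_ : Fintype ι) (q : ι → E) (τ : K.space → ι → ℝ), Continuous τ ∧
      ∀ y, τ y ∈ stdSimplexSkeleton ι n ∧ ∑ i, τ y i • q i = y := by
  classical
  obtain ⟨c, hc, hcy⟩ := K.exists_continuous_faceWeights hfin
  obtain ⟨P, hP⟩ := exists_finset_forall_subset_of_faces_finite hfin
  refine ⟨P, inferInstance, Subtype.val, fun y i => c y i,
    continuous_pi fun i => (continuous_apply i.1).comp hc, fun y => ?_⟩
  obtain ⟨s, hs, hcs, hsum⟩ := hcy y
  refine ⟨⟨⟨fun i => hcs.1 i, ?_⟩, ?_⟩, ?_⟩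
  · rw [sum_coe_sort P (c y), ← sum_subset (hP s hs) fun v _ hv => hcs.2.1 v hv, hcs.2.2]
  · calc #{i : P | c y i ≠ 0}
        ≤ #s := card_le_card_of_injOn Subtype.val
          (fun i hi => by_contra fun h => (mem_filter.1 hi).2 (hcs.2.1 _ h))
          Subtype.val_injective.injOn
      _ ≤ n + 1 := hdim s hs
  · rw [sum_coe_sort P (fun v => c y v • v), sum_smul_eq_of_mem_faceWeights hcs (hP s hs), hsum]

theorem exists_fine_open_cover (hfin : K.faces.Finite) {n : ℕ}
    (hdim : ∀ s ∈ K.faces, #s ≤ n + 1) {δ : ℝ} (hδ : 0 < δ) :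
    ∃ (κ : Type u) (_ : Fintype κ) (U : κ → Set K.space), (∀ w, IsOpen (U w)) ∧
      (⋃ w, U w = Set.univ) ∧ (∀ y, Nat.card {w // y ∈ U w} ≤ n + 1) ∧
      ∀ w, ∀ y ∈ U w, ∀ y' ∈ U w, dist y y' < δ := by
  classical
  obtain ⟨ι, _, q, τ, hτ, hτy⟩ := K.exists_continuous_stdSimplexSkeleton_coords hfin hdim
  obtain ⟨κ, _, T, hT, hTmaps, hTδ⟩ := exists_fine_subdivision q n hδ
  refine ⟨κ, inferInstance, fun w => {y | T (τ y) w ≠ 0},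
    fun w => isOpen_compl_singleton.preimage ((continuous_apply w).comp (hT.comp hτ)),
    Set.eq_univ_of_forall fun y => ?_, fun y => ?_, fun w y hy y' hy' => ?_⟩
  · have h1 : ∑ w, T (τ y) w ≠ 0 := by rw [(hTmaps (hτy y).1).1.2]; exact one_ne_zero
    obtain ⟨w, -, hw⟩ := exists_ne_zero_of_sum_ne_zero h1
    exact Set.mem_iUnion.2 ⟨w, hw⟩
  · rw [Nat.card_eq_fintype_card, Fintype.card_subtype]
    exact (hTmaps (hτy y).1).2
  · rw [Subtype.dist_eq, ← (hτy y).2, ← (hτy y').2]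
    exact hTδ _ (hτy y).1 _ (hτy y').1 w hy hy'

end Geometry.SimplicialComplex

section Width

variable {X : Type*} [MetricSpace X]

lemma setRadius_le_of_subset_eball {A : Set X} {x : X} {r : ℝ≥0∞} (h : A ⊆ eball x r) :
    setRadius A ≤ r :=
  iInf₂_le_of_le x r (iInf_le _ h)

lemma setRadius_mono {A B : Set X} (h : A ⊆ B) : setRadius A ≤ setRadius B :=
  le_iInf₂ fun _ _ => le_iInf fun hB => setRadius_le_of_subset_eball (h.trans hB)

lemma setRadius_empty [Nonempty X] : setRadius (∅ : Set X) = 0 :=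
  nonpos_iff_eq_zero.1 <|
    setRadius_le_of_subset_eball (x := Classical.arbitrary X) (r := 0) (Set.empty_subset _)

lemma exists_subset_eball_of_setRadius_lt {A : Set X} {R : ℝ≥0∞} (h : setRadius A < R) :
    ∃ x r, r < R ∧ A ⊆ eball x r := by
  obtain ⟨x, hx⟩ := iInf_lt_iff.1 h
  obtain ⟨r, hr⟩ := iInf_lt_iff.1 hx
  obtain ⟨hA, hr⟩ := iInf_lt_iff.1 hr
  exact ⟨x, r, hr, hA⟩

lemma exists_cover_of_width_lt {m : ℕ} {R : ℝ≥0∞} (h : width X m < R) :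
    ∃ (k : ℕ) (V : Fin k → Set X), (∀ i, IsOpen (V i)) ∧ (⋃ i, V i = Set.univ) ∧
      (∀ x, Nat.card {i // x ∈ V i} ≤ m + 1) ∧ ⨆ i, setRadius (V i) < R := by
  simpa only [width, iInf_lt_iff, exists_prop] using h

lemma width_le_of_cover {m k : ℕ} {V : Fin k → Set X} (hV : ∀ i, IsOpen (V i))
    (hcover : ⋃ i, V i = Set.univ) (hmult : ∀ x, Nat.card {i // x ∈ V i} ≤ m + 1) :
    width X m ≤ ⨆ i, setRadius (V i) :=
  (iInf_le _ k).trans <| (iInf_le _ V).trans <| (iInf_le _ hV).trans <|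
    (iInf_le _ hcover).trans <| iInf_le _ hmult

lemma width_lt_of_cover {κ : Type*} [Finite κ] {V : κ → Set X} (hV : ∀ w, IsOpen (V w))
    (hcover : ⋃ w, V w = Set.univ) {m : ℕ} (hmult : ∀ x, Nat.card {w // x ∈ V w} ≤ m + 1)
    {R : ℝ≥0∞} (hR : 0 < R) (hrad : ∀ w, setRadius (V w) < R) : width X m < R := by
  obtain ⟨k, ⟨e⟩⟩ := Finite.exists_equiv_fin κ
  refine (width_le_of_cover (V := V ∘ e.symm) (fun j => hV _) ?_ fun x => ?_).trans_lt ?_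
  · rw [← hcover]; exact e.symm.surjective.iUnion_comp V
  · exact (Nat.card_congr (e.symm.subtypeEquiv fun _ => Iff.rfl)).trans_le (hmult x)
  · rw [← Finset.sup_univ_eq_iSup, Finset.sup_lt_iff hR]
    exact fun j _ => hrad _

end Width

section Converse

variable {X : Type*} [MetricSpace X] [CompactSpace X] {R : ℝ≥0∞}

lemma exists_isOpen_mem_setRadius_preimage_lt {Y : Type*} [TopologicalSpace Y] [T2Space Y]
    (ψ : C(X, Y)) {y : Y} (hy : setRadius (ψ ⁻¹' {y}) < R) :
    ∃ U, IsOpen U ∧ y ∈ U ∧ setRadius (ψ ⁻¹' U) < R := by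
  obtain ⟨x, r, hr, hsub⟩ := exists_subset_eball_of_setRadius_lt hy
  have hclosed : IsClosed (ψ '' (eball x r)ᶜ) :=
    (isOpen_eball.isClosed_compl.isCompact.image ψ.continuous).isClosed
  refine ⟨(ψ '' (eball x r)ᶜ)ᶜ, hclosed.isOpen_compl, ?_,
    (setRadius_le_of_subset_eball (x := x) (r := r) fun z hz => ?_).trans_lt hr⟩
  · rintro ⟨z, hz, hzy⟩
    exact hz (hsub hzy)
  · by_contra h
    exact hz ⟨z, h, rfl⟩

lemma exists_pos_forall_setRadius_preimage_ball_lt {Y : Type*} [MetricSpace Y] (ψ : C(X, Y))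
    (hψ : ∀ y, setRadius (ψ ⁻¹' {y}) < R) :
    ∃ δ > 0, ∀ x, setRadius (ψ ⁻¹' ball (ψ x) δ) < R := by
  choose U hU hyU hUR using fun y => exists_isOpen_mem_setRadius_preimage_lt ψ (hψ y)
  obtain ⟨δ, hδ, hball⟩ := lebesgue_number_lemma_of_metric (isCompact_range ψ.continuous) hU
    fun y _ => Set.mem_iUnion.2 ⟨y, hyU y⟩
  refine ⟨δ, hδ, fun x => ?_⟩
  obtain ⟨y, hy⟩ := hball (ψ x) ⟨x, rfl⟩
  exact (setRadius_mono (Set.preimage_mono hy)).trans_lt (hUR y)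

theorem width_lt_of_map_to_complex [Nonempty X] {E : Type*} [NormedAddCommGroup E]
    [NormedSpace ℝ E] {K : SimplicialComplex ℝ E} (hfin : K.faces.Finite) {n : ℕ}
    (hdim : ∀ s ∈ K.faces, #s ≤ n + 1) (ψ : C(X, K.space))
    (hψ : ∀ y, setRadius (ψ ⁻¹' {y}) < R) : width X n < R := by
  have hR : 0 < R := pos_of_gt (hψ (ψ (Classical.arbitrary X)))
  obtain ⟨δ, hδ, hball⟩ := exists_pos_forall_setRadius_preimage_ball_lt ψ hψ
  obtain ⟨κ, _, U, hU, hcover, hmult, hdist⟩ := K.exists_fine_open_cover hfin hdim hδ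
  refine width_lt_of_cover (V := fun w => ψ ⁻¹' U w) (fun w => (hU w).preimage ψ.continuous) ?_
    (fun x => hmult (ψ x)) hR fun w => ?_
  · rw [← Set.preimage_iUnion, hcover, Set.preimage_univ]
  · obtain h | ⟨x, hx⟩ := (ψ ⁻¹' U w).eq_empty_or_nonempty
    · rw [h, setRadius_empty]
      exact hR
    · refine (setRadius_mono fun x' hx' => ?_).trans_lt (hball x)
      exact mem_ball.2 (hdist w _ hx' _ hx)

end Converse

section Nerve

variable {ι X : Type*}

def nerve (V : ι → Set X) : PreAbstractSimplicialComplex ι where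
  faces := {s | s.Nonempty ∧ ∃ x, ∀ i ∈ s, x ∈ V i}
  isRelLowerSet_faces := fun _ ⟨hs, x, hx⟩ =>
    ⟨hs, fun _ hts ht => ⟨ht, x, fun i hi => hx i (hts hi)⟩⟩

lemma card_le_of_mem_nerve [Finite ι] {V : ι → Set X} {m : ℕ}
    (hmult : ∀ x, Nat.card {i // x ∈ V i} ≤ m + 1) {s : Finset ι} (hs : s ∈ (nerve V).faces) :
    #s ≤ m + 1 := by
  obtain ⟨-, x, hx⟩ := hs
  have := Fintype.ofFinite ι
  classical
  refine (card_le_card fun i hi => mem_filter.2 ⟨mem_univ i, hx i hi⟩).trans ?_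
  rw [← Fintype.card_subtype, ← Nat.card_eq_fintype_card]
  exact hmult x

variable [Fintype ι] [DecidableEq ι]

open Classical in
noncomputable def PreAbstractSimplicialComplex.realize (K : PreAbstractSimplicialComplex ι) :
    SimplicialComplex ℝ (EuclideanSpace ℝ ι) :=
  SimplicialComplex.ofAffineIndependent (K.map fun i => EuclideanSpace.single i 1) <| by
    refine ((EuclideanSpace.basisFun ι ℝ).toBasis.linearIndependent.affineIndependent.range.mono
      fun x hx => ?_)
    simp only [Set.mem_iUnion, Finset.mem_coe] at hx
    obtain ⟨_, ⟨s, _, rfl⟩, hx⟩ := hx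
    obtain ⟨i, -, rfl⟩ := Finset.mem_image.1 hx
    exact ⟨i, by simp⟩

namespace PreAbstractSimplicialComplex

variable (K : PreAbstractSimplicialComplex ι)

lemma faces_realize_finite : K.realize.faces.Finite :=
  (Set.toFinite K.faces).image _

lemma exists_card_le_of_mem_faces_realize {s : Finset (EuclideanSpace ℝ ι)}
    (hs : s ∈ K.realize.faces) : ∃ t ∈ K.faces, #s ≤ #t := by
  obtain ⟨t, ht, rfl⟩ := hs
  exact ⟨t, ht, card_image_le⟩

lemma toLp_mem_space_realize {t : ι → ℝ} (ht : t ∈ stdSimplex ℝ ι)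
    (hK : ({i | t i ≠ 0} : Finset ι) ∈ K.faces) : WithLp.toLp 2 t ∈ K.realize.space := by
  classical
  set s : Finset ι := {i | t i ≠ 0}
  refine SimplicialComplex.mem_space_iff.2 ⟨s.image fun i => EuclideanSpace.single i 1,
    ⟨s, hK, by convert rfl⟩, ?_⟩
  have ht_eq : WithLp.toLp 2 t = ∑ i ∈ s, t i • EuclideanSpace.single i (1 : ℝ) := by
    ext j
    by_cases hj : t j = 0 <;> simp [s, hj, Pi.single_apply]
  rw [ht_eq]
  refine (convex_convexHull ℝ _).sum_mem (fun i _ => ht.1 i) ?_ fun i hi =>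
    subset_convexHull ℝ _ (Finset.mem_coe.2 (mem_image_of_mem _ hi))
  rw [sum_filter_ne_zero, ht.2]

end PreAbstractSimplicialComplex

theorem exists_map_to_realize_nerve [TopologicalSpace X] [NormalSpace X] [ParacompactSpace X]
    {V : ι → Set X} (hV : ∀ i, IsOpen (V i)) (hcover : ⋃ i, V i = Set.univ) :
    ∃ ψ : C(X, (nerve V).realize.space), ∀ x, ∃ i, ψ ⁻¹' {ψ x} ⊆ V i := by
  obtain ⟨f, hf⟩ := PartitionOfUnity.exists_isSubordinate isClosed_univ V hV hcover.ge
  have hsimplex (x : X) : (fun i => f i x) ∈ stdSimplex ℝ ι := by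
    refine ⟨fun i => f.nonneg i x, ?_⟩
    rw [← finsum_eq_sum_of_fintype]
    exact f.sum_eq_one (Set.mem_univ x)
  have hsub (x : X) {i : ι} (hi : f i x ≠ 0) : x ∈ V i := hf i (subset_tsupport _ hi)
  have hface (x : X) : ({i | f i x ≠ 0} : Finset ι) ∈ (nerve V).faces := by
    obtain ⟨i, hi⟩ := f.exists_pos (Set.mem_univ x)
    exact ⟨⟨i, by simpa using hi.ne'⟩, x, fun i hi => hsub x (by simpa using hi)⟩
  refine ⟨⟨fun x => ⟨WithLp.toLp 2 fun i => f i x,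
    (nerve V).toLp_mem_space_realize (hsimplex x) (hface x)⟩,
    ((PiLp.continuous_toLp 2 _).comp (continuous_pi fun i => (f i).continuous)).subtype_mk _⟩,
    fun x => ?_⟩
  obtain ⟨i, hi⟩ := f.exists_pos (Set.mem_univ x)
  refine ⟨i, fun x' hx' => hsub x' ?_⟩
  have hfx : f i x' = f i x :=
    congrArg (fun y : (nerve V).realize.space => (y : EuclideanSpace ℝ ι) i) hx'
  exact hfx ▸ hi.ne'

end Nerve

theorem exists_map_to_complex_of_width_lt {X : Type*} [MetricSpace X] [Nonempty X] {n : ℕ}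
    {R : ℝ≥0∞} (h : width X n < R) :
    ∃ (m : ℕ) (N : SimplicialComplex ℝ (EuclideanSpace ℝ (Fin m))), N.faces.Finite ∧
      (∀ s ∈ N.faces, #s ≤ n + 1) ∧
      ∃ ψ : C(X, N.space), ∀ y, setRadius (ψ ⁻¹' {y}) < R := by
  obtain ⟨k, V, hV, hcover, hmult, hrad⟩ := exists_cover_of_width_lt h
  obtain ⟨ψ, hψ⟩ := exists_map_to_realize_nerve hV hcover
  refine ⟨k, (nerve V).realize, (nerve V).faces_realize_finite, fun s hs => ?_, ψ, fun y => ?_⟩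
  · obtain ⟨t, ht, hst⟩ := (nerve V).exists_card_le_of_mem_faces_realize hs
    exact hst.trans (card_le_of_mem_nerve hmult ht)
  · obtain hempty | ⟨x, rfl⟩ := (ψ ⁻¹' {y}).eq_empty_or_nonempty
    · rw [hempty, setRadius_empty]
      exact pos_of_gt h
    · obtain ⟨i, hi⟩ := hψ x
      exact (setRadius_mono hi).trans_lt ((le_iSup (fun i => setRadius (V i)) i).trans_lt hrad)

theorem width_lt_iff_exists_map_to_complex_general
    {X : Type*} [MetricSpace X] [CompactSpace X] [Nonempty X]
    (n : ℕ) (R : ℝ≥0∞) :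
    width X n < R ↔
      ∃ (m : ℕ) (N : SimplicialComplex ℝ (EuclideanSpace ℝ (Fin m))),
        N.faces.Finite ∧
        (∀ s ∈ N.faces, s.card ≤ n + 1) ∧
        ∃ ψ : C(X, N.space), ∀ y : N.space, setRadius (⇑ψ ⁻¹' {y}) < R :=
  ⟨exists_map_to_complex_of_width_lt,
    fun ⟨_, _, hfin, hdim, ψ, hψ⟩ => width_lt_of_map_to_complex hfin hdim ψ hψ⟩

/-- **Width via maps to simplicial complexes.** For a compact metric space `X`, one has
`width_n X < R` if and only if there is a finite simplicial complex `N` of dimension at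
most `n` (realized geometrically in some Euclidean space) and a continuous map `ψ : X → N`
all of whose fibers have radius less than `R` in `X`. -/
theorem width_lt_iff_exists_map_to_complex
    {X : Type*} [MetricSpace X] [CompactSpace X] [Nonempty X]
    (n : ℕ) (R : ℝ≥0∞) (hR : 0 < R) :
    width X n < R ↔
      ∃ (m : ℕ) (N : SimplicialComplex ℝ (EuclideanSpace ℝ (Fin m))),
        N.faces.Finite ∧
        (∀ s ∈ N.faces, s.card ≤ n + 1) ∧
        ∃ ψ : C(X, N.space), ∀ y : N.space, setRadius (⇑ψ ⁻¹' {y}) < R :=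
  width_lt_iff_exists_map_to_complex_general n R
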